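/- Let X be a finite nonempty alphabet and let p, q be probability distributions on X with p(x) > 0 and q(x) > 0 for all x. Then for every λ ∈ [0,1], H*(λp + (1−λ)q) ≥ λ H*(p) + (1−λ) H*(q); moreover if p ≠ q and 0 < λ < 1 the inequality is strict. That is, the Lin entropy functional H* is strictly concave on the interior of the probability simplex. -/

import Mathlib

/-!
For `t > 0` the summand of `H*` is `t + (t² log t - t (t + 1) log (t + 1)) / (2 log 2)`, whose
second derivative is `(2 log (t / (t + 1)) + 1 / (t + 1)) / (2 log 2)`. Since
`log (t / (t + 1)) ≤ t / (t + 1) - 1 = -1 / (t + 1)`, this is negative, so each summand is strictly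
concave on `(0, ∞)`. A sum of strictly concave functions of the separate coordinates is strictly
concave on the product, and two distinct distributions differ in some coordinate.
-/

/-- Lin entropy of a distribution on a finite alphabet. -/
noncomputable def linEntropy {X : Type*} [Fintype X] (p : X → ℝ) : ℝ :=
  ∑ x, p x * ((1 / 2) * Real.logb 2 (4 * p x ^ p x / (p x + 1) ^ (p x + 1)))

open Real Set Filter Topology

theorem StrictConcaveOn.sum_comp_apply {𝕜 E β ι : Type*} [Fintype ι] [Semiring 𝕜] [PartialOrder 𝕜]
    [AddCommMonoid E] [Module 𝕜 E] [AddCommMonoid β] [PartialOrder β]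
    [IsOrderedCancelAddMonoid β] [Module 𝕜 β] {s : Set E} {f : E → β}
    (hf : StrictConcaveOn 𝕜 s f) :
    StrictConcaveOn 𝕜 (univ.pi fun _ : ι => s) (fun p => ∑ i, f (p i)) := by
  refine ⟨convex_pi fun i _ => hf.1, fun p hp q hq hpq a b ha hb hab => ?_⟩
  obtain ⟨i, hi⟩ := Function.ne_iff.1 hpq
  rw [Finset.smul_sum, Finset.smul_sum, ← Finset.sum_add_distrib]
  refine Finset.sum_lt_sum (fun j _ => hf.concaveOn.2 (hp j trivial) (hq j trivial) ha.le hb.le hab)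
    ⟨i, Finset.mem_univ i, hf.2 (hp i trivial) (hq i trivial) hi ha hb hab⟩

theorem strictConcaveOn_of_hasDerivAt2_neg {D : Set ℝ} (hD : Convex ℝ D) (hDo : IsOpen D)
    {f f' f'' : ℝ → ℝ} (hf : ∀ x ∈ D, HasDerivAt f (f' x) x)
    (hf' : ∀ x ∈ D, HasDerivAt f' (f'' x) x) (hf'' : ∀ x ∈ D, f'' x < 0) :
    StrictConcaveOn ℝ D f := by
  refine strictConcaveOn_of_deriv2_neg' hD
    (fun x hx => (hf x hx).continuousAt.continuousWithinAt) fun x hx => ?_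
  have hderiv : deriv f =ᶠ[𝓝 x] f' :=
    eventually_of_mem (hDo.mem_nhds hx) fun y hy => (hf y hy).deriv
  rw [Function.iterate_succ_apply, Function.iterate_one, hderiv.deriv_eq, (hf' x hx).deriv]
  exact hf'' x hx

theorem Real.log_sub_log_add_one_le {t : ℝ} (ht : 0 < t) : log t - log (t + 1) ≤ -(t + 1)⁻¹ := by
  have ht1 : 0 < t + 1 := by linarith
  rw [← log_div ht.ne' ht1.ne']
  convert log_le_sub_one_of_pos (div_pos ht ht1) using 1
  field_simp
  ring

noncomputable def linTerm (t : ℝ) : ℝ :=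
  t * ((1 / 2) * logb 2 (4 * t ^ t / (t + 1) ^ (t + 1)))

noncomputable def linTermDeriv (t : ℝ) : ℝ :=
  1 + (2 * t * log t - (2 * t + 1) * log (t + 1)) / (2 * log 2)

theorem linTerm_eq {t : ℝ} (ht : 0 < t) :
    linTerm t = t + (t ^ 2 * log t - (t ^ 2 + t) * log (t + 1)) / (2 * log 2) := by
  have ht1 : 0 < t + 1 := by linarith
  have hlog : log (4 * t ^ t / (t + 1) ^ (t + 1))
      = 2 * log 2 + t * log t - (t + 1) * log (t + 1) := by
    rw [log_div (by positivity) (by positivity), log_mul (by norm_num) (by positivity),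
      log_rpow ht, log_rpow ht1, show (4 : ℝ) = 2 ^ 2 by norm_num, log_pow]
    push_cast
    ring
  have hlog2 : log 2 ≠ 0 := (log_pos one_lt_two).ne'
  rw [linTerm, logb, hlog]
  field_simp
  ring

theorem hasDerivAt_linTerm {t : ℝ} (ht : 0 < t) : HasDerivAt linTerm (linTermDeriv t) t := by
  have ht1 : t + 1 ≠ 0 := by positivity
  have hclosed : HasDerivAt
      (fun s => s + (s ^ 2 * log s - (s ^ 2 + s) * log (s + 1)) / (2 * log 2))
      (linTermDeriv t) t := by
    have h := (hasDerivAt_id t).add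
      ((((hasDerivAt_pow 2 t).mul (hasDerivAt_log ht.ne')).sub
        (((hasDerivAt_pow 2 t).add (hasDerivAt_id t)).mul
          ((hasDerivAt_log ht1).comp t ((hasDerivAt_id t).add_const 1)))).div_const
        (2 * log 2))
    refine h.congr_deriv ?_
    simp only [linTermDeriv, Pi.add_apply, Function.comp_apply, id]
    field_simp
    ring
  refine hclosed.congr_of_eventuallyEq ?_
  filter_upwards [Ioi_mem_nhds ht] with s hs using linTerm_eq hs

theorem hasDerivAt_linTermDeriv {t : ℝ} (ht : 0 < t) :
    HasDerivAt linTermDeriv ((2 * log t - 2 * log (t + 1) + (t + 1)⁻¹) / (2 * log 2)) t := by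
  have ht1 : t + 1 ≠ 0 := by positivity
  have h := ((((hasDerivAt_id t).const_mul 2).mul (hasDerivAt_log ht.ne')).sub
    ((((hasDerivAt_id t).const_mul 2).add_const 1).mul
      ((hasDerivAt_log ht1).comp t ((hasDerivAt_id t).add_const 1)))).div_const
    (2 * log 2) |>.const_add 1
  refine h.congr_deriv ?_
  simp only [Function.comp_apply, id]
  field_simp
  ring

theorem strictConcaveOn_linTerm : StrictConcaveOn ℝ (Ioi 0) linTerm := by
  refine strictConcaveOn_of_hasDerivAt2_neg (convex_Ioi 0) isOpen_Ioi
    (fun t ht => hasDerivAt_linTerm ht) (fun t ht => hasDerivAt_linTermDeriv ht)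
    fun t (ht : 0 < t) => ?_
  have hinv : 0 < (t + 1)⁻¹ := by positivity
  have hlog := log_sub_log_add_one_le ht
  exact div_neg_of_neg_of_pos (by linarith) (by positivity)

theorem strictConcaveOn_linEntropy {X : Type*} [Fintype X] :
    StrictConcaveOn ℝ (univ.pi fun _ : X => Ioi 0) linEntropy :=
  strictConcaveOn_linTerm.sum_comp_apply

theorem linEntropy_strictConcave_general
    {X : Type*} [Fintype X] (p q : X → ℝ)
    (hp : ∀ x, 0 < p x) (hq : ∀ x, 0 < q x)
    (lam : ℝ) (h0 : 0 ≤ lam) (h1 : lam ≤ 1) :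
    linEntropy (fun x => lam * p x + (1 - lam) * q x) ≥
        lam * linEntropy p + (1 - lam) * linEntropy q ∧
      (p ≠ q → 0 < lam → lam < 1 →
        linEntropy (fun x => lam * p x + (1 - lam) * q x) >
          lam * linEntropy p + (1 - lam) * linEntropy q) := by
  have hpS : p ∈ univ.pi fun _ => Ioi 0 := fun x _ => hp x
  have hqS : q ∈ univ.pi fun _ => Ioi 0 := fun x _ => hq x
  exact ⟨strictConcaveOn_linEntropy.concaveOn.2 hpS hqS h0 (by linarith) (by ring),
    fun hpq hl0 hl1 => strictConcaveOn_linEntropy.2 hpS hqS hpq hl0 (by linarith) (by ring)⟩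

/-- Lin entropy is concave on the interior of the probability simplex, and strictly so:
for strictly positive distributions `p ≠ q` and `0 < λ < 1` the concavity inequality is
strict. -/
theorem linEntropy_strictConcave
    {X : Type*} [Fintype X] [Nonempty X] (p q : X → ℝ)
    (hp : ∀ x, 0 < p x) (hq : ∀ x, 0 < q x)
    (hps : ∑ x, p x = 1) (hqs : ∑ x, q x = 1)
    (lam : ℝ) (h0 : 0 ≤ lam) (h1 : lam ≤ 1) :
    linEntropy (fun x => lam * p x + (1 - lam) * q x) ≥
        lam * linEntropy p + (1 - lam) * linEntropy q ∧
      (p ≠ q → 0 < lam → lam < 1 →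
        linEntropy (fun x => lam * p x + (1 - lam) * q x) >
          lam * linEntropy p + (1 - lam) * linEntropy q) :=
  linEntropy_strictConcave_general p q hp hq lam h0 h1
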